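/- arXiv:0711.3411 — 2 statements merged into one kernel-verified Lean document; each statement's English description precedes it below -/
import Mathlib

section
/- For a differentiable curve of invertible symmetric matrices C(t), the vector field identity Y⟨C⁻¹(|t|)x, x⟩ = 4⟨x, B C⁻¹(|t|) x⟩ - ⟨C⁻¹(|t|)x, A₀ C⁻¹(|t|)x⟩ holds for t < 0, where Y = ⟨x, B D⟩ - ∂_t, C(s) = ∫₀ˢ E(r) A₀ E(r)ᵀ dr with E(r) = exp(-r Bᵀ), assuming C(|t|) is invertible. -/
/-!
For `t < 0`, `u` agrees near `(x, t)` with `⟨C(-t)⁻¹ x, x⟩`. Since `C` is symmetric, the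
`x`-gradient is `2 C⁻¹ x`, so the transport part of `Y` gives `2⟨x, B C⁻¹ x⟩`, while
`-∂ₜ u = -⟨C⁻¹ C' C⁻¹ x, x⟩`. The matrix `Bᵀ C(s) + C(s) B + E(s) A₀ E(s)ᵀ` has zero derivative,
so `C' = A₀ - Bᵀ C - C B`; substituting, the two cross terms each contribute another
`⟨x, B C⁻¹ x⟩`.
-/

open Matrix

-- Any norm would do: all that is used is that square matrices form a complete normed ℝ-algebra.
attribute [local instance] Matrix.linftyOpNormedRing Matrix.linftyOpNormedAlgebra

section NormedAlgebra

variable {𝔸 : Type*} [NormedRing 𝔸] [NormedAlgebra ℝ 𝔸] [CompleteSpace 𝔸]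

theorem hasDerivAt_exp_neg_smul (K : 𝔸) (r : ℝ) :
    HasDerivAt (fun r : ℝ => NormedSpace.exp (-r • K)) (-K * NormedSpace.exp (-r • K)) r := by
  simpa only [smul_neg, neg_smul] using hasDerivAt_exp_smul_const' (-K) r

/-- `K * ∫₀ˢ h + (∫₀ˢ h) * L + h s` has derivative zero in `s`, hence stays equal to `h 0`. -/
theorem mul_integral_add_integral_mul_eq_sub {h : ℝ → 𝔸} {K L : 𝔸}
    (hh : ∀ r, HasDerivAt h (-(K * h r + h r * L)) r) (s : ℝ) :
    K * (∫ r in 0..s, h r) + (∫ r in 0..s, h r) * L = h 0 - h s := by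
  have hc : Continuous h := continuous_iff_continuousAt.2 fun r => (hh r).continuousAt
  set F : ℝ → 𝔸 := fun s => K * (∫ r in 0..s, h r) + (∫ r in 0..s, h r) * L + h s
  have hF : ∀ s, HasDerivAt F 0 s := fun s => by
    have hI := (hc.integral_hasStrictDerivAt 0 s).hasDerivAt
    exact (((hI.const_mul K).add (hI.mul_const L)).add (hh s)).congr_deriv (add_neg_cancel _)
  have hconst := is_const_of_deriv_eq_zero (fun s => (hF s).differentiableAt)
    (fun s => (hF s).deriv) s 0
  simp only [F, intervalIntegral.integral_same, mul_zero, zero_mul, zero_add] at hconst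
  rw [eq_sub_iff_add_eq, hconst]

end NormedAlgebra

section QuadraticForms

variable {n : Type*} [Fintype n] [DecidableEq n] {M : Matrix n n ℝ}

omit [DecidableEq n] in
theorem Matrix.IsSymm.mul_mul_transpose (hM : M.IsSymm) (P : Matrix n n ℝ) :
    (P * M * Pᵀ).IsSymm := by
  rw [IsSymm, transpose_mul, transpose_mul, transpose_transpose, hM.eq, mul_assoc]

omit [DecidableEq n] in
theorem sum_sum_mul_mul_eq_dotProduct_mulVec (B : Matrix n n ℝ) (x w : n → ℝ) :
    ∑ i, ∑ j, B i j * x i * w j = x ⬝ᵥ B *ᵥ w := by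
  simp only [dotProduct, mulVec, Finset.mul_sum]
  exact Finset.sum_congr rfl fun i _ => Finset.sum_congr rfl fun j _ => by ring

theorem Matrix.IsSymm.mulVec_single_dotProduct_add (hM : M.IsSymm) (x : n → ℝ) (j : n) :
    M *ᵥ Pi.single j 1 ⬝ᵥ x + M *ᵥ x ⬝ᵥ Pi.single j 1 = 2 * (M *ᵥ x) j := by
  have hcol : M.col j ⬝ᵥ x = (M *ᵥ x) j := by
    rw [col, hM.eq]
    rfl
  rw [mulVec_single_one, dotProduct_single_one, hcol]
  ring

theorem Matrix.IsSymm.mul_sub_lyapunov_mul_dotProduct (hM : M.IsSymm) {C : Matrix n n ℝ}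
    (hMC : M * C = 1) (hCM : C * M = 1) (A B : Matrix n n ℝ) (x : n → ℝ) :
    (M * (A - (Bᵀ * C + C * B)) * M) *ᵥ x ⬝ᵥ x
      = M *ᵥ x ⬝ᵥ A *ᵥ (M *ᵥ x) - 2 * (x ⬝ᵥ B *ᵥ (M *ᵥ x)) := by
  have hexpand : M * (A - (Bᵀ * C + C * B)) * M = M * A * M - M * Bᵀ - B * M := by
    rw [show M * (A - (Bᵀ * C + C * B)) * M
        = M * A * M - M * Bᵀ * (C * M) - M * C * (B * M) by noncomm_ring, hCM, hMC,
      mul_one, one_mul]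
  have hvecMul : x ᵥ* M = M *ᵥ x := by rw [← mulVec_transpose, hM.eq]
  have hMAM : (M * A * M) *ᵥ x ⬝ᵥ x = M *ᵥ x ⬝ᵥ A *ᵥ (M *ᵥ x) := by
    rw [dotProduct_comm, ← mulVec_mulVec, ← mulVec_mulVec, dotProduct_mulVec, hvecMul]
  have hMBt : (M * Bᵀ) *ᵥ x ⬝ᵥ x = x ⬝ᵥ B *ᵥ (M *ᵥ x) := by
    rw [dotProduct_comm, ← mulVec_mulVec, dotProduct_mulVec, hvecMul, dotProduct_mulVec,
      vecMul_transpose, dotProduct_comm]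
  have hBM : (B * M) *ᵥ x ⬝ᵥ x = x ⬝ᵥ B *ᵥ (M *ᵥ x) := by
    rw [← mulVec_mulVec, dotProduct_comm]
  rw [hexpand, sub_mulVec, sub_mulVec, sub_dotProduct, sub_dotProduct, hMAM, hMBt, hBM]
  ring

end QuadraticForms

section MatrixCalculus

variable {n : Type*} [Fintype n] [DecidableEq n]

theorem HasDerivAt.matrix_transpose {f : ℝ → Matrix n n ℝ} {f' : Matrix n n ℝ} {r : ℝ}
    (hf : HasDerivAt f f' r) : HasDerivAt (fun r => (f r)ᵀ) f'ᵀ r :=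
  (transposeLinearEquiv n n ℝ ℝ).toLinearMap.toContinuousLinearMap.hasFDerivAt.comp_hasDerivAt r hf

theorem HasDerivAt.matrix_mul_mul_transpose {f : ℝ → Matrix n n ℝ} {f' : Matrix n n ℝ} {r : ℝ}
    (hf : HasDerivAt f f' r) (A : Matrix n n ℝ) :
    HasDerivAt (fun r => f r * A * (f r)ᵀ) (f' * A * (f r)ᵀ + f r * A * f'ᵀ) r :=
  (hf.mul_const A).mul hf.matrix_transpose

theorem hasDerivAt_exp_neg_smul_transpose_mul_mul_transpose (B A : Matrix n n ℝ) (r : ℝ) :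
    HasDerivAt (fun r : ℝ => NormedSpace.exp (-r • Bᵀ) * A * (NormedSpace.exp (-r • Bᵀ))ᵀ)
      (-(Bᵀ * (NormedSpace.exp (-r • Bᵀ) * A * (NormedSpace.exp (-r • Bᵀ))ᵀ)
        + NormedSpace.exp (-r • Bᵀ) * A * (NormedSpace.exp (-r • Bᵀ))ᵀ * B)) r :=
  ((hasDerivAt_exp_neg_smul Bᵀ r).matrix_mul_mul_transpose A).congr_deriv <| by
    simp only [transpose_mul, transpose_neg, transpose_transpose]
    noncomm_ring

theorem HasDerivAt.matrix_inv {f : ℝ → Matrix n n ℝ} {f' : Matrix n n ℝ} {s : ℝ}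
    (hf : HasDerivAt f f' s) (hdet : IsUnit (f s).det) :
    HasDerivAt (fun s => (f s)⁻¹) (-((f s)⁻¹ * f' * (f s)⁻¹)) s := by
  obtain ⟨U, hU⟩ := (isUnit_iff_isUnit_det (f s)).2 hdet
  have hUinv : (↑U⁻¹ : Matrix n n ℝ) = (f s)⁻¹ := by rw [coe_units_inv, hU]
  have hinv := hasFDerivAt_ringInverse (𝕜 := ℝ) U
  rw [hUinv, hU] at hinv
  have h := hinv.comp_hasDerivAt s hf
  simp only [Function.comp_def, ← nonsing_inv_eq_ringInverse] at h
  exact h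

theorem Matrix.intervalIntegral_apply {f : ℝ → Matrix n n ℝ} {a b : ℝ}
    (hf : Continuous f) (i j : n) :
    (∫ r in a..b, f r) i j = ∫ r in a..b, f r i j :=
  ((entryLinearMap ℝ ℝ i j).toContinuousLinearMap.intervalIntegral_comp_comm
    (hf.intervalIntegrable a b)).symm

theorem fderiv_mulVec_dotProduct_apply {Q : ℝ → Matrix n n ℝ} {Q' : Matrix n n ℝ} {t : ℝ}
    (hQ : HasDerivAt Q Q' t) (x v : n → ℝ) (σ : ℝ) :
    fderiv ℝ (fun z : (n → ℝ) × ℝ => Q z.2 *ᵥ z.1 ⬝ᵥ z.1) (x, t) (v, σ)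
      = Q t *ᵥ v ⬝ᵥ x + Q t *ᵥ x ⬝ᵥ v + σ * (Q' *ᵥ x ⬝ᵥ x) := by
  let μ := (mulVecBilin ℝ ℝ : Matrix n n ℝ →ₗ[ℝ] (n → ℝ) →ₗ[ℝ] n → ℝ).toContinuousBilinearMap
  let β := (dotProductBilin ℝ ℝ : (n → ℝ) →ₗ[ℝ] (n → ℝ) →ₗ[ℝ] ℝ).toContinuousBilinearMap
  have hfst := hasFDerivAt_fst (𝕜 := ℝ) (p := (x, t))
  have hQsnd := hQ.hasFDerivAt.comp (x, t) (hasFDerivAt_snd (𝕜 := ℝ) (p := (x, t)))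
  have hq : HasFDerivAt (fun z : (n → ℝ) × ℝ => Q z.2 *ᵥ z.1 ⬝ᵥ z.1) _ (x, t) :=
    β.hasFDerivAt_of_bilinear (μ.hasFDerivAt_of_bilinear hQsnd hfst) hfst
  rw [hq.fderiv]
  change Q t *ᵥ x ⬝ᵥ v + (Q t *ᵥ v + (σ • Q') *ᵥ x) ⬝ᵥ x = _
  rw [add_dotProduct, smul_mulVec, smul_dotProduct, smul_eq_mul]
  ring

end MatrixCalculus

section Covariance

variable {n : Type*} [Fintype n] [DecidableEq n]

noncomputable def covariance (B A : Matrix n n ℝ) (s : ℝ) : Matrix n n ℝ :=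
  ∫ r in 0..s, NormedSpace.exp (-r • Bᵀ) * A * (NormedSpace.exp (-r • Bᵀ))ᵀ

theorem covariance_apply (B A : Matrix n n ℝ) (s : ℝ) (i j : n) :
    covariance B A s i j
      = ∫ r in 0..s, (NormedSpace.exp (-r • Bᵀ) * A * (NormedSpace.exp (-r • Bᵀ))ᵀ) i j :=
  intervalIntegral_apply (by fun_prop) i j

theorem isSymm_covariance (B : Matrix n n ℝ) {A : Matrix n n ℝ} (hA : A.IsSymm) (s : ℝ) :
    (covariance B A s).IsSymm :=
  IsSymm.ext fun i j => by
    rw [covariance_apply, covariance_apply]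
    exact intervalIntegral.integral_congr fun r _ => (hA.mul_mul_transpose _).apply i j

theorem hasDerivAt_covariance (B A : Matrix n n ℝ) (s : ℝ) :
    HasDerivAt (covariance B A) (A - (Bᵀ * covariance B A s + covariance B A s * B)) s := by
  have hh := hasDerivAt_exp_neg_smul_transpose_mul_mul_transpose B A
  have hcont := continuous_iff_continuousAt.2 fun r => (hh r).continuousAt
  have hd : HasDerivAt (covariance B A) _ s := (hcont.integral_hasStrictDerivAt 0 s).hasDerivAt
  refine hd.congr_deriv ?_
  rw [covariance, mul_integral_add_integral_mul_eq_sub hh]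
  simp

end Covariance

/-- For `t < 0`, the vector field identity
`Y⟨C⁻¹(|t|)x, x⟩ = 4⟨x, B C⁻¹(|t|) x⟩ - ⟨C⁻¹(|t|)x, A₀ C⁻¹(|t|)x⟩`, where
`Y = ⟨x, B D⟩ - ∂_t`, `C(s) = ∫₀ˢ E(r) A₀ E(r)ᵀ dr`, `E(r) = exp(-r Bᵀ)`,
assuming `C(s)` is invertible for `s > 0`. -/
theorem Y_of_inverse_covariance_quadratic_form
    (N : ℕ) (B A₀ : Matrix (Fin N) (Fin N) ℝ) (hA₀ : A₀ᵀ = A₀)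
    (E : ℝ → Matrix (Fin N) (Fin N) ℝ)
    (hE : ∀ r : ℝ, E r = NormedSpace.exp (-r • Bᵀ))
    (C : ℝ → Matrix (Fin N) (Fin N) ℝ)
    (hC : ∀ s : ℝ, ∀ i j : Fin N, C s i j = ∫ r in (0:ℝ)..s, (E r * A₀ * (E r)ᵀ) i j)
    (hinv : ∀ s : ℝ, 0 < s → IsUnit (C s).det)
    (u : ((Fin N → ℝ) × ℝ) → ℝ)
    (hu : ∀ z : ((Fin N → ℝ) × ℝ), u z = (C |z.2|)⁻¹.mulVec z.1 ⬝ᵥ z.1)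
    (x : Fin N → ℝ) (t : ℝ) (ht : t < 0) :
    (∑ i : Fin N, ∑ j : Fin N,
        B i j * x i * fderiv ℝ u (x, t) (Pi.single j 1, 0))
      - fderiv ℝ u (x, t) (0, 1)
    = 4 * (x ⬝ᵥ B.mulVec ((C |t|)⁻¹.mulVec x))
      - ((C |t|)⁻¹.mulVec x ⬝ᵥ A₀.mulVec ((C |t|)⁻¹.mulVec x)) := by
  obtain rfl : E = fun r => NormedSpace.exp (-r • Bᵀ) := funext hE
  obtain rfl : C = covariance B A₀ :=
    funext fun s => ext fun i j => by rw [hC, covariance_apply]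
  have hdet := hinv (-t) (neg_pos.2 ht)
  have hQ := ((hasDerivAt_covariance B A₀ (-t)).matrix_inv hdet).scomp t (hasDerivAt_neg t)
  simp only [Function.comp_def, neg_smul, one_smul, neg_neg] at hQ
  have hu_eq : u =ᶠ[nhds (x, t)] fun z => (covariance B A₀ (-z.2))⁻¹ *ᵥ z.1 ⬝ᵥ z.1 := by
    filter_upwards [(isOpen_lt continuous_snd continuous_const).mem_nhds ht] with z hz
    rw [hu, abs_of_neg hz]
  have hsymm := (isSymm_covariance B hA₀ (-t)).inv
  rw [hu_eq.fderiv_eq, abs_of_neg ht]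
  simp only [fderiv_mulVec_dotProduct_apply hQ, hsymm.mulVec_single_dotProduct_add,
    hsymm.mul_sub_lyapunov_mul_dotProduct (nonsing_inv_mul _ hdet) (mul_nonsing_inv _ hdet),
    mulVec_zero, zero_dotProduct, dotProduct_zero, zero_mul, one_mul, add_zero, zero_add,
    mul_left_comm _ (2 : ℝ), ← Finset.mul_sum, sum_sum_mul_mul_eq_dotProduct_mulVec]
  ring
end

section
/- If the block matrix B₀ is strictly block upper triangular with blocks B₁,...,B_d on the superdiagonal (with respect to the partition N = m₀ + m₁ + ⋯ + m_d), then the matrix C₀(t) = ∫₀ᵗ E₀(s) A₀ E₀(s)ᵀ ds, where E₀(s) = exp(-s B₀ᵀ) and A₀ = diag(I_{m₀}, 0), satisfies the scaling law C₀(t) = D_{√t} C₀(1) D_{√t} for all t > 0, where D_λ = diag(λ I_{m₀}, λ³ I_{m₁}, ..., λ^{2d+1} I_{m_d}). -/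
/-!
Let `w p = λ^(2k+1)` on the `k`-th block, with `λ = √t`. Since `B₀` only couples block `k` with
block `k + 1` and `A₀` lives on block `0`, conjugation by `D = diagonal w` rescales them as
`D B₀ᵀ D⁻¹ = t • B₀ᵀ` and `D⁻¹ A₀ D⁻¹ = t⁻¹ • A₀`. Hence `E₀(t s) = D E₀(s) D⁻¹`, the integrand of
`C₀` at `t s` is `t⁻¹ • D (E₀(s) A₀ E₀(s)ᵀ) D`, and the substitution `s ↦ t s` in `∫₀ᵗ` gives
`C₀(t) = D C₀(1) D`.
-/

open Matrix NormedSpace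

namespace Matrix

variable {ι R : Type*} [Fintype ι] [DecidableEq ι]

theorem diagonal_mul_eq_smul_mul_diagonal [CommSemiring R] {w : ι → R} {c : R}
    {M : Matrix ι ι R} (hM : ∀ p q, M p q ≠ 0 → w p = c * w q) :
    diagonal w * M = c • (M * diagonal w) := by
  ext p q
  rw [diagonal_mul, smul_apply, mul_diagonal, smul_eq_mul]
  by_cases h : M p q = 0
  · simp [h]
  · rw [hM p q h]; ring

theorem diagonal_mul_mul_diagonal_eq_smul [CommSemiring R] {w : ι → R} {c : R}
    {A : Matrix ι ι R} (hA : ∀ p q, A p q ≠ 0 → w p * w q = c) :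
    diagonal w * A * diagonal w = c • A := by
  ext p q
  rw [mul_diagonal, diagonal_mul, smul_apply, smul_eq_mul]
  by_cases h : A p q = 0
  · simp [h]
  · rw [← hA p q h]; ring

theorem exp_smul_eq_diagonal_mul_exp_smul_mul_diagonal_inv {w : ι → ℝ} {c : ℝ}
    (hw : ∀ p, w p ≠ 0) {M : Matrix ι ι ℝ} (hM : ∀ p q, M p q ≠ 0 → w p = c * w q) (s : ℝ) :
    exp ((c * s) • M) = diagonal w * exp (s • M) * diagonal w⁻¹ := by
  have hinv : diagonal w * diagonal w⁻¹ = 1 := by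
    rw [diagonal_mul_diagonal, ← diagonal_one]
    exact congrArg diagonal (funext fun p => mul_inv_cancel₀ (hw p))
  have hinv' : diagonal w⁻¹ * diagonal w = 1 := by
    rw [diagonal_mul_diagonal, ← diagonal_one]
    exact congrArg diagonal (funext fun p => inv_mul_cancel₀ (hw p))
  have hconj : diagonal w * (s • M) * diagonal w⁻¹ = (c * s) • M := by
    rw [Matrix.mul_smul, diagonal_mul_eq_smul_mul_diagonal hM, Matrix.smul_mul, Matrix.smul_mul,
      Matrix.mul_assoc, hinv, Matrix.mul_one, smul_smul, mul_comm]
  rw [← hconj]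
  exact exp_units_conj ⟨diagonal w, diagonal w⁻¹, hinv, hinv'⟩ (s • M)

theorem exp_smul_mul_mul_exp_smul_transpose_scaling {w : ι → ℝ} {c : ℝ} (hw : ∀ p, w p ≠ 0)
    {M A : Matrix ι ι ℝ} (hM : ∀ p q, M p q ≠ 0 → w p = c * w q)
    (hA : ∀ p q, A p q ≠ 0 → w p * w q = c) (s : ℝ) :
    exp ((c * s) • M) * A * (exp ((c * s) • M))ᵀ
      = c⁻¹ • (diagonal w * (exp (s • M) * A * (exp (s • M))ᵀ) * diagonal w) := by
  have hA' : diagonal w⁻¹ * A * diagonal w⁻¹ = c⁻¹ • A :=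
    diagonal_mul_mul_diagonal_eq_smul fun p q h => by
      rw [Pi.inv_apply, Pi.inv_apply, ← mul_inv, hA p q h]
  rw [exp_smul_eq_diagonal_mul_exp_smul_mul_diagonal_inv hw hM, transpose_mul, transpose_mul,
    diagonal_transpose, diagonal_transpose]
  calc diagonal w * exp (s • M) * diagonal w⁻¹ * A * (diagonal w⁻¹ * ((exp (s • M))ᵀ * diagonal w))
      = diagonal w * exp (s • M) * (diagonal w⁻¹ * A * diagonal w⁻¹) * (exp (s • M))ᵀ
          * diagonal w := by simp only [Matrix.mul_assoc]
    _ = _ := by rw [hA']; simp only [Matrix.mul_smul, Matrix.smul_mul, Matrix.mul_assoc]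

theorem intervalIntegral_exp_smul_mul_mul_exp_smul_transpose_scaling {w : ι → ℝ} {c : ℝ}
    (hc : c ≠ 0) (hw : ∀ p, w p ≠ 0) {M A : Matrix ι ι ℝ}
    (hM : ∀ p q, M p q ≠ 0 → w p = c * w q) (hA : ∀ p q, A p q ≠ 0 → w p * w q = c) (p q : ι) :
    ∫ s in (0 : ℝ)..c, (exp (s • M) * A * (exp (s • M))ᵀ) p q
      = w p * (∫ s in (0 : ℝ)..1, (exp (s • M) * A * (exp (s • M))ᵀ) p q) * w q := by
  have hsubst := intervalIntegral.smul_integral_comp_mul_left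
    (fun s => (exp (s • M) * A * (exp (s • M))ᵀ) p q) c (a := 0) (b := 1)
  simp only [mul_zero, mul_one] at hsubst
  simp only [← hsubst, exp_smul_mul_mul_exp_smul_transpose_scaling hw hM hA, smul_apply,
    mul_diagonal, diagonal_mul, smul_eq_mul, intervalIntegral.integral_const_mul,
    intervalIntegral.integral_mul_const]
  field_simp

end Matrix

theorem covariance_scaling_law_general
    (d : ℕ) (m : Fin (d + 1) → ℕ)
    (B₀ : Matrix (Σ k : Fin (d + 1), Fin (m k)) (Σ k : Fin (d + 1), Fin (m k)) ℝ)
    (hB₀ : ∀ p q : Σ k : Fin (d + 1), Fin (m k),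
      B₀ p q ≠ 0 → (q.1 : ℕ) = (p.1 : ℕ) + 1)
    (A₀ : Matrix (Σ k : Fin (d + 1), Fin (m k)) (Σ k : Fin (d + 1), Fin (m k)) ℝ)
    (hA₀ : A₀ = Matrix.diagonal (fun p => if (p.1 : ℕ) = 0 then (1 : ℝ) else 0))
    (E₀ : ℝ → Matrix (Σ k : Fin (d + 1), Fin (m k)) (Σ k : Fin (d + 1), Fin (m k)) ℝ)
    (hE₀ : ∀ s : ℝ, E₀ s = NormedSpace.exp (-s • B₀ᵀ))
    (C₀ : ℝ → Matrix (Σ k : Fin (d + 1), Fin (m k)) (Σ k : Fin (d + 1), Fin (m k)) ℝ)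
    (hC₀ : ∀ t : ℝ, ∀ p q : Σ k : Fin (d + 1), Fin (m k),
      C₀ t p q = ∫ s in (0:ℝ)..t, (E₀ s * A₀ * (E₀ s)ᵀ) p q)
    (D : ℝ → Matrix (Σ k : Fin (d + 1), Fin (m k)) (Σ k : Fin (d + 1), Fin (m k)) ℝ)
    (hD : ∀ lam : ℝ, D lam = Matrix.diagonal (fun p => lam ^ (2 * (p.1 : ℕ) + 1))) :
    ∀ t : ℝ, 0 < t → C₀ t = D (Real.sqrt t) * C₀ 1 * D (Real.sqrt t) := by
  intro t ht
  have hlam : Real.sqrt t ^ 2 = t := Real.sq_sqrt ht.le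
  have hw : ∀ p : Σ k : Fin (d + 1), Fin (m k), Real.sqrt t ^ (2 * (p.1 : ℕ) + 1) ≠ 0 :=
    fun p => pow_ne_zero _ (Real.sqrt_pos.mpr ht).ne'
  have hB : ∀ p q, (-B₀ᵀ) p q ≠ 0 →
      Real.sqrt t ^ (2 * (p.1 : ℕ) + 1) = t * Real.sqrt t ^ (2 * (q.1 : ℕ) + 1) := by
    intro p q h
    rw [neg_apply, neg_ne_zero, transpose_apply] at h
    rw [hB₀ q p h]
    linear_combination Real.sqrt t ^ (2 * (q.1 : ℕ) + 1) * hlam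
  have hA : ∀ p q, A₀ p q ≠ 0 →
      Real.sqrt t ^ (2 * (p.1 : ℕ) + 1) * Real.sqrt t ^ (2 * (q.1 : ℕ) + 1) = t := by
    intro p q h
    rw [hA₀, diagonal_apply] at h
    split_ifs at h with hpq hp
    · subst hpq
      rw [hp]
      linear_combination hlam
    · exact absurd rfl h
    · exact absurd rfl h
  ext p q
  simp only [hC₀, hE₀, hD, mul_diagonal, diagonal_mul, neg_smul, ← smul_neg]
  exact intervalIntegral_exp_smul_mul_mul_exp_smul_transpose_scaling ht.ne' hw hB hA p q

/-- If `B₀` is strictly block upper triangular with blocks only on the block superdiagonal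
(with respect to the partition `N = m₀ + ⋯ + m_d`), then
`C₀(t) = ∫₀ᵗ E₀(s) A₀ E₀(s)ᵀ ds`, with `E₀(s) = exp(-s B₀ᵀ)` and `A₀ = diag(I_{m₀}, 0)`,
satisfies `C₀(t) = D_{√t} C₀(1) D_{√t}` for all `t > 0`, where
`D_λ = diag(λ I_{m₀}, λ³ I_{m₁}, ..., λ^{2d+1} I_{m_d})`. -/
theorem covariance_scaling_law
    (d : ℕ) (m : Fin (d + 1) → ℕ)
    (hm : ∀ k l : Fin (d + 1), k ≤ l → m l ≤ m k)
    (B₀ : Matrix (Σ k : Fin (d + 1), Fin (m k)) (Σ k : Fin (d + 1), Fin (m k)) ℝ)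
    (hB₀ : ∀ p q : Σ k : Fin (d + 1), Fin (m k),
      B₀ p q ≠ 0 → (q.1 : ℕ) = (p.1 : ℕ) + 1)
    (A₀ : Matrix (Σ k : Fin (d + 1), Fin (m k)) (Σ k : Fin (d + 1), Fin (m k)) ℝ)
    (hA₀ : A₀ = Matrix.diagonal (fun p => if (p.1 : ℕ) = 0 then (1 : ℝ) else 0))
    (E₀ : ℝ → Matrix (Σ k : Fin (d + 1), Fin (m k)) (Σ k : Fin (d + 1), Fin (m k)) ℝ)
    (hE₀ : ∀ s : ℝ, E₀ s = NormedSpace.exp (-s • B₀ᵀ))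
    (C₀ : ℝ → Matrix (Σ k : Fin (d + 1), Fin (m k)) (Σ k : Fin (d + 1), Fin (m k)) ℝ)
    (hC₀ : ∀ t : ℝ, ∀ p q : Σ k : Fin (d + 1), Fin (m k),
      C₀ t p q = ∫ s in (0:ℝ)..t, (E₀ s * A₀ * (E₀ s)ᵀ) p q)
    (D : ℝ → Matrix (Σ k : Fin (d + 1), Fin (m k)) (Σ k : Fin (d + 1), Fin (m k)) ℝ)
    (hD : ∀ lam : ℝ, D lam = Matrix.diagonal (fun p => lam ^ (2 * (p.1 : ℕ) + 1))) :
    ∀ t : ℝ, 0 < t → C₀ t = D (Real.sqrt t) * C₀ 1 * D (Real.sqrt t) :=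
  covariance_scaling_law_general d m B₀ hB₀ A₀ hA₀ E₀ hE₀ C₀ hC₀ D hD
end
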